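/- arXiv:1602.05822 — 6 statements merged into one kernel-verified Lean document; each statement's English description precedes it below -/
import Mathlib

section
/- For all natural numbers A, k, t, the following identity holds in the integers: k^t · S(A,k) = Σ C(t,u) · (-1)^v · S(v+w, v) · S(A+u, k-v), where the sum ranges over all triples of natural numbers (u,v,w) with u + v + w = t, C(t,u) is the binomial coefficient, and S(A+u, k-v) is interpreted as 0 when v > k. -/
/-- Stirling numbers of the second kind: `stirling A k` is the number of
partitions of a set of `A` labelled elements into exactly `k` nonempty
unlabelled blocks. -/
def stirling : ℕ → ℕ → ℕ
  | 0, 0 => 1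
  | 0, _ + 1 => 0
  | _ + 1, 0 => 0
  | n + 1, k + 1 => (k + 1) * stirling n (k + 1) + stirling n k

lemma stirling_succ_succ (n k : ℕ) :
    stirling (n + 1) (k + 1) = (k + 1) * stirling n (k + 1) + stirling n k := rfl

lemma stirling_succ_zero (n : ℕ) : stirling (n + 1) 0 = 0 := rfl

lemma stirling_eq_zero_of_lt : ∀ {n k : ℕ}, n < k → stirling n k = 0
  | 0, _ + 1, _ => rfl
  | n + 1, k + 1, h => by
      rw [stirling_succ_succ, stirling_eq_zero_of_lt (show n < k + 1 by omega),
        stirling_eq_zero_of_lt (show n < k by omega)]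
      ring

def Tm (A k u v : ℕ) : ℤ := if v ≤ k then (stirling (A + u) (k - v) : ℤ) else 0

lemma key (A k u v : ℕ) :
    (k : ℤ) * Tm A k u v
      = Tm A k (u + 1) v - Tm A k u (v + 1) + (v : ℤ) * Tm A k u v := by
  unfold Tm
  rcases lt_trichotomy v k with h | h | h
  · rw [if_pos h.le, if_pos h.le, if_pos (show v + 1 ≤ k from h)]
    have hm : k - v = (k - (v + 1)) + 1 := by omega
    have hA : A + (u + 1) = (A + u) + 1 := by ring
    rw [hA, hm, stirling_succ_succ]
    have hk : (k : ℤ) = (v : ℤ) + ((k - (v + 1) : ℕ) : ℤ) + 1 := by omega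
    push_cast
    linear_combination (stirling (A + u) (k - (v + 1) + 1) : ℤ) * hk
  · subst h
    rw [if_pos le_rfl, if_pos le_rfl, if_neg (by omega)]
    have h0 : v - v = 0 := by omega
    have hA : A + (u + 1) = (A + u) + 1 := by ring
    rw [h0, hA, stirling_succ_zero]
    push_cast
    ring
  · rw [if_neg (by omega), if_neg (by omega), if_neg (by omega)]
    ring

lemma inner_step (n : ℕ) (c : ℤ) (T' : ℕ → ℤ) :
    ∑ v ∈ Finset.range (n + 1 + 1), c * (-1 : ℤ) ^ v * stirling (n + 1) v * T' v
      = ∑ v ∈ Finset.range (n + 1),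
          c * (-1 : ℤ) ^ v * stirling n v * ((v : ℤ) * T' v - T' (v + 1)) := by
  rw [Finset.sum_range_succ']
  have h0 : c * (-1 : ℤ) ^ 0 * stirling (n + 1) 0 * T' 0 = 0 := by
    rw [stirling_succ_zero]; push_cast; ring
  rw [h0, add_zero]
  have hsplit : ∀ v ∈ Finset.range (n + 1),
      c * (-1 : ℤ) ^ (v + 1) * stirling (n + 1) (v + 1) * T' (v + 1)
        = (c * (-1 : ℤ) ^ (v + 1) * ((v : ℤ) + 1) * stirling n (v + 1) * T' (v + 1))
          + (- (c * (-1 : ℤ) ^ v * stirling n v * T' (v + 1))) := by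
    intro v _
    rw [stirling_succ_succ]
    push_cast
    ring
  rw [Finset.sum_congr rfl hsplit, Finset.sum_add_distrib]
  have hrhs : ∀ v ∈ Finset.range (n + 1),
      c * (-1 : ℤ) ^ v * stirling n v * ((v : ℤ) * T' v - T' (v + 1))
        = (c * (-1 : ℤ) ^ v * (v : ℤ) * stirling n v * T' v)
          + (- (c * (-1 : ℤ) ^ v * stirling n v * T' (v + 1))) := by
    intro v _; ring
  rw [Finset.sum_congr rfl hrhs, Finset.sum_add_distrib]
  congr 1
  -- ∑_{v∈range(n+1)} c*(-1)^(v+1)*(v+1)*S(n,v+1)*T'(v+1) = ∑_{v∈range(n+1)} c*(-1)^v*v*S(n,v)*T' v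
  rw [Finset.sum_range_succ, Finset.sum_range_succ' (fun v => c * (-1:ℤ)^v * (v:ℤ) * stirling n v * T' v)]
  rw [stirling_eq_zero_of_lt (show n < n + 1 by omega)]
  push_cast
  ring

lemma G_eq (A k t : ℕ) :
    (∑ u ∈ Finset.range (t + 1), ∑ v ∈ Finset.range (t - u + 1),
        (t.choose u : ℤ) * (-1) ^ v * stirling (t - u) v * Tm A k u v)
      = (k : ℤ) ^ t * stirling A k := by
  induction t with
  | zero => simp [Tm, stirling]
  | succ t ih =>
    have hRHS : (k : ℤ) *
        (∑ u ∈ Finset.range (t + 1), ∑ v ∈ Finset.range (t - u + 1),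
          (t.choose u : ℤ) * (-1) ^ v * stirling (t - u) v * Tm A k u v)
        = (∑ u ∈ Finset.range (t + 1), ∑ v ∈ Finset.range (t - u + 1),
            (t.choose u : ℤ) * (-1) ^ v * stirling (t - u) v * Tm A k (u + 1) v)
          + (∑ u ∈ Finset.range (t + 1), ∑ v ∈ Finset.range (t - u + 1),
            (t.choose u : ℤ) * (-1) ^ v * stirling (t - u) v *
              ((v : ℤ) * Tm A k u v - Tm A k u (v + 1))) := by
      rw [Finset.mul_sum, ← Finset.sum_add_distrib]
      refine Finset.sum_congr rfl fun u _ => ?_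
      rw [Finset.mul_sum, ← Finset.sum_add_distrib]
      refine Finset.sum_congr rfl fun v _ => ?_
      linear_combination ((t.choose u : ℤ) * (-1) ^ v * stirling (t - u) v) * key A k u v
    have hL : (∑ u ∈ Finset.range (t + 1 + 1), ∑ v ∈ Finset.range (t + 1 - u + 1),
          ((t + 1).choose u : ℤ) * (-1) ^ v * stirling (t + 1 - u) v * Tm A k u v)
        = (∑ u ∈ Finset.range (t + 1), ∑ v ∈ Finset.range (t - u + 1),
            (t.choose u : ℤ) * (-1) ^ v * stirling (t - u) v * Tm A k (u + 1) v)
          + (∑ u ∈ Finset.range (t + 1), ∑ v ∈ Finset.range (t - u + 1),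
            (t.choose u : ℤ) * (-1) ^ v * stirling (t - u) v *
              ((v : ℤ) * Tm A k u v - Tm A k u (v + 1))) := by
      rw [Finset.sum_range_succ']
      have hsplit : ∀ u ∈ Finset.range (t + 1),
          (∑ v ∈ Finset.range (t + 1 - (u + 1) + 1),
              ((t + 1).choose (u + 1) : ℤ) * (-1) ^ v * stirling (t + 1 - (u + 1)) v *
                Tm A k (u + 1) v)
            = (∑ v ∈ Finset.range (t - u + 1),
                (t.choose u : ℤ) * (-1) ^ v * stirling (t - u) v * Tm A k (u + 1) v)
              + (∑ v ∈ Finset.range (t + 1 - (u + 1) + 1),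
                (t.choose (u + 1) : ℤ) * (-1) ^ v * stirling (t + 1 - (u + 1)) v *
                  Tm A k (u + 1) v) := by
        intro u _
        have h1 : t + 1 - (u + 1) = t - u := by omega
        rw [h1, ← Finset.sum_add_distrib]
        refine Finset.sum_congr rfl fun v _ => ?_
        rw [Nat.choose_succ_succ]
        push_cast
        ring
      rw [Finset.sum_congr rfl hsplit, Finset.sum_add_distrib, add_assoc]
      congr 1
      have hF0 : (∑ v ∈ Finset.range (t + 1 - 0 + 1),
            ((t + 1).choose 0 : ℤ) * (-1) ^ v * stirling (t + 1 - 0) v * Tm A k 0 v)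
          = (∑ v ∈ Finset.range (t + 1 - 0 + 1),
            (t.choose 0 : ℤ) * (-1) ^ v * stirling (t + 1 - 0) v * Tm A k 0 v) := by
        simp
      rw [hF0,
        ← Finset.sum_range_succ' (fun u => ∑ v ∈ Finset.range (t + 1 - u + 1),
            (t.choose u : ℤ) * (-1) ^ v * stirling (t + 1 - u) v * Tm A k u v) (t + 1),
        Finset.sum_range_succ]
      have hlast : (∑ v ∈ Finset.range (t + 1 - (t + 1) + 1),
          (t.choose (t + 1) : ℤ) * (-1) ^ v * stirling (t + 1 - (t + 1)) v *
            Tm A k (t + 1) v) = 0 := by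
        have : t.choose (t + 1) = 0 := Nat.choose_eq_zero_of_lt (by omega)
        simp [this]
      rw [hlast, add_zero]
      refine Finset.sum_congr rfl fun u hu => ?_
      rw [Finset.mem_range] at hu
      have h1 : t + 1 - u = t - u + 1 := by omega
      rw [h1]
      exact inner_step (t - u) (t.choose u : ℤ) (Tm A k u)
    rw [hL, hRHS.symm, ih]
    ring

/-- `k^t · S(A,k) = Σ_{u+v+w=t} C(t,u) · (-1)^v · S(v+w, v) · S(A+u, k-v)`,
where `S(A+u, k-v)` is interpreted as `0` when `v > k`. -/
theorem pow_mul_stirling_expansion (A k t : ℕ) :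
    (k : ℤ) ^ t * stirling A k
      = ∑ u ∈ Finset.range (t + 1), ∑ v ∈ Finset.range (t - u + 1),
          (t.choose u : ℤ) * (-1) ^ v * stirling (v + (t - u - v)) v *
            (if v ≤ k then (stirling (A + u) (k - v) : ℤ) else 0) := by
  rw [← G_eq A k t]
  refine Finset.sum_congr rfl fun u hu => Finset.sum_congr rfl fun v hv => ?_
  rw [Finset.mem_range] at hu hv
  have h1 : v + (t - u - v) = t - u := by omega
  rw [h1]
  rfl
end

section
/- For all natural numbers N ≥ 2 and A, the sum over all functions f : Fin A → Fin N of the square of the cardinality of the range of f equals N·(N^A - (N-1)^A) + N·(N-1)·(N^A - 2·(N-1)^A + (N-2)^A), as an identity in the integers. -/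
open Finset

lemma avoid_count (N A : ℕ) (S : Finset (Fin N)) :
    (Finset.univ.filter (fun f : Fin A → Fin N => ∀ a, f a ∉ S)).card
      = (N - S.card) ^ A := by
  have h : Finset.univ.filter (fun f : Fin A → Fin N => ∀ a, f a ∉ S)
      = Fintype.piFinset (fun _ : Fin A => Sᶜ) := by
    ext f
    simp [Fintype.mem_piFinset]
  rw [h, Fintype.card_piFinset]
  simp [Finset.card_compl]

lemma cnt_eq (N A : ℕ) (S : Finset (Fin N)) :
    (∑ f : Fin A → Fin N, (if ∀ a, f a ∉ S then (1:ℤ) else 0))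
      = ((N - S.card : ℕ) : ℤ) ^ A := by
  rw [Finset.sum_boole, avoid_count N A S]
  push_cast
  ring

/-- The sum over all functions `f : Fin A → Fin N` of the square of the
cardinality of the range of `f` equals
`N·(N^A - (N-1)^A) + N·(N-1)·(N^A - 2·(N-1)^A + (N-2)^A)`. -/
theorem sum_sq_card_range (N A : ℕ) (hN : 2 ≤ N) :
    ∑ f : Fin A → Fin N, ((Finset.image f Finset.univ).card : ℤ) ^ 2
      = (N : ℤ) * ((N : ℤ) ^ A - ((N : ℤ) - 1) ^ A)
        + (N : ℤ) * ((N : ℤ) - 1) *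
            ((N : ℤ) ^ A - 2 * ((N : ℤ) - 1) ^ A + ((N : ℤ) - 2) ^ A) := by
  have e1 : ((N - 1 : ℕ) : ℤ) = (N : ℤ) - 1 := by
    have h1 : 1 ≤ N := by omega
    push_cast [h1]; ring
  have e2 : ((N - 2 : ℕ) : ℤ) = (N : ℤ) - 2 := by
    push_cast [hN]; ring
  set g : Fin N → (Fin A → Fin N) → ℤ :=
    fun i f => if ∀ a, f a ∉ ({i} : Finset (Fin N)) then (1:ℤ) else 0 with hg
  have hone : (∑ _f : Fin A → Fin N, (1:ℤ)) = (N:ℤ)^A := by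
    simp [Finset.card_univ]
  have hsingle : ∀ i : Fin N,
      (∑ f : Fin A → Fin N, g i f) = ((N:ℤ) - 1)^A := by
    intro i
    rw [hg]
    rw [cnt_eq, Finset.card_singleton, e1]
  have hpair : ∀ i j : Fin N,
      (∑ f : Fin A → Fin N, g i f * g j f)
        = if i = j then ((N:ℤ) - 1)^A else ((N:ℤ) - 2)^A := by
    intro i j
    have hmul : ∀ f : Fin A → Fin N,
        g i f * g j f
          = if ∀ a, f a ∉ ({i, j} : Finset (Fin N)) then (1:ℤ) else 0 := by
      intro f
      have hiff : (∀ a, f a ∉ ({i, j} : Finset (Fin N)))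
          ↔ (∀ a, f a ∉ ({i} : Finset (Fin N))) ∧ (∀ a, f a ∉ ({j} : Finset (Fin N))) := by
        simp [not_or, forall_and]
      rw [hg]
      simp only
      rw [if_congr hiff rfl rfl]
      by_cases hi : ∀ a, f a ∉ ({i} : Finset (Fin N))
      · by_cases hj : ∀ a, f a ∉ ({j} : Finset (Fin N))
        · rw [if_pos hi, if_pos hj, if_pos ⟨hi, hj⟩]; ring
        · have hn : ¬ ((∀ a, f a ∉ ({i} : Finset (Fin N)))
              ∧ (∀ a, f a ∉ ({j} : Finset (Fin N)))) := fun h => hj h.2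
          rw [if_pos hi, if_neg hj, if_neg hn]; ring
      · have hn : ¬ ((∀ a, f a ∉ ({i} : Finset (Fin N)))
            ∧ (∀ a, f a ∉ ({j} : Finset (Fin N)))) := fun h => hi h.1
        rw [if_neg hi, if_neg hn]; ring
    rw [Finset.sum_congr rfl fun f _ => hmul f, cnt_eq]
    by_cases h : i = j
    · subst h
      simp [e1]
    · rw [if_neg h]
      rw [Finset.card_insert_of_notMem (by simp [h]), Finset.card_singleton, e2]
  have key : ∀ f : Fin A → Fin N,
      ((Finset.image f Finset.univ).card : ℤ) ^ 2
        = ∑ i : Fin N, ∑ j : Fin N, (1 - g i f) * (1 - g j f) := by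
    intro f
    have h1 : ((Finset.image f Finset.univ).card : ℤ)
        = ∑ i : Fin N, (1 - g i f) := by
      have h2 : ∀ i : Fin N, (1 - g i f)
          = if i ∈ Finset.image f Finset.univ then (1:ℤ) else 0 := by
        intro i
        rw [hg]
        simp only
        by_cases h : ∃ b, f b = i
        · obtain ⟨a, ha⟩ := h
          have hne : ¬ ∀ b : Fin A, f b ∉ ({i} : Finset (Fin N)) := by
            push_neg; exact ⟨a, by simp [ha]⟩
          have hmem : i ∈ Finset.image f Finset.univ :=
            Finset.mem_image.mpr ⟨a, Finset.mem_univ a, ha⟩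
          rw [if_neg hne, if_pos hmem]; ring
        · have hall : ∀ b : Fin A, f b ∉ ({i} : Finset (Fin N)) := by
            intro b hb; exact h ⟨b, by simpa using hb⟩
          have hmem : i ∉ Finset.image f Finset.univ := by
            simp only [Finset.mem_image, Finset.mem_univ, true_and]; exact h
          rw [if_pos hall, if_neg hmem]; ring
      rw [Finset.sum_congr rfl fun i _ => h2 i, Finset.sum_boole]
      simp
    rw [h1, sq, Finset.sum_mul_sum]
  rw [Finset.sum_congr rfl fun f _ => key f]
  rw [Finset.sum_comm]
  have swap2 : ∀ i : Fin N,
      (∑ f : Fin A → Fin N, ∑ j : Fin N, (1 - g i f) * (1 - g j f))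
        = ∑ j : Fin N, ∑ f : Fin A → Fin N, (1 - g i f) * (1 - g j f) :=
    fun i => Finset.sum_comm
  rw [Finset.sum_congr rfl fun i _ => swap2 i]
  have inner : ∀ i j : Fin N,
      (∑ f : Fin A → Fin N, (1 - g i f) * (1 - g j f))
        = (N:ℤ)^A - ((N:ℤ)-1)^A - ((N:ℤ)-1)^A
            + (if i = j then ((N:ℤ) - 1)^A else ((N:ℤ) - 2)^A) := by
    intro i j
    have expand : ∀ f : Fin A → Fin N,
        (1 - g i f) * (1 - g j f) = 1 - g i f - g j f + g i f * g j f :=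
      fun f => by ring
    rw [Finset.sum_congr rfl fun f _ => expand f, Finset.sum_add_distrib,
      Finset.sum_sub_distrib, Finset.sum_sub_distrib, hone, hsingle i, hsingle j,
      hpair i j]
  rw [Finset.sum_congr rfl fun i _ =>
    Finset.sum_congr rfl fun j _ => inner i j]
  have hrow : ∀ i : Fin N,
      (∑ j : Fin N, ((N:ℤ)^A - ((N:ℤ)-1)^A - ((N:ℤ)-1)^A
          + (if i = j then ((N:ℤ) - 1)^A else ((N:ℤ) - 2)^A)))
        = (N:ℤ) * ((N:ℤ)^A - ((N:ℤ)-1)^A - ((N:ℤ)-1)^A + ((N:ℤ)-2)^A)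
          + (((N:ℤ)-1)^A - ((N:ℤ)-2)^A) := by
    intro i
    have step : ∀ j : Fin N,
        ((N:ℤ)^A - ((N:ℤ)-1)^A - ((N:ℤ)-1)^A
          + (if i = j then ((N:ℤ) - 1)^A else ((N:ℤ) - 2)^A))
        = ((N:ℤ)^A - ((N:ℤ)-1)^A - ((N:ℤ)-1)^A + ((N:ℤ)-2)^A)
          + (if i = j then ((N:ℤ)-1)^A - ((N:ℤ)-2)^A else 0) := by
      intro j
      split <;> ring
    rw [Finset.sum_congr rfl fun j _ => step j, Finset.sum_add_distrib,
      Finset.sum_const, Finset.sum_ite_eq]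
    simp [Finset.card_univ]
  rw [Finset.sum_congr rfl fun i _ => hrow i, Finset.sum_const]
  simp only [Finset.card_univ, Fintype.card_fin, nsmul_eq_mul]
  ring
end

section
/- Let N ≥ 2 and A be natural numbers, and let k denote the cardinality of the range of a uniformly random function f : Fin A → Fin N. Then the variance of k equals N·(N-1)·(1 - 2/N)^A + N·(1 - 1/N)^A - N^2·(1 - 1/N)^{2A}. -/
lemma count_avoid {N A : ℕ} (t : Finset (Fin N)) :
    (Finset.univ.filter (fun f : Fin A → Fin N => ∀ a, f a ∉ t)).card
      = (tᶜ.card) ^ A := by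
  have h : (Finset.univ.filter (fun f : Fin A → Fin N => ∀ a, f a ∉ t))
      = Fintype.piFinset (fun _ : Fin A => tᶜ) := by
    ext f
    simp [Fintype.mem_piFinset]
  rw [h, Fintype.card_piFinset]
  simp

def u {N A : ℕ} (t : Finset (Fin N)) (f : Fin A → Fin N) : ℚ :=
  if ∀ a, f a ∉ t then 1 else 0

lemma sum_u {N A : ℕ} (t : Finset (Fin N)) :
    ∑ f : Fin A → Fin N, u t f = ((tᶜ.card : ℚ)) ^ A := by
  unfold u
  rw [Finset.sum_boole, count_avoid]
  push_cast
  ring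

lemma ind_eq {N A : ℕ} (i : Fin N) (f : Fin A → Fin N) :
    (if i ∈ Finset.image f Finset.univ then (1:ℚ) else 0) = 1 - u {i} f := by
  have hnot : (∀ a, f a ∉ ({i} : Finset (Fin N))) ↔ i ∉ Finset.image f Finset.univ := by
    simp [Finset.mem_image, eq_comm]
  unfold u
  by_cases h : i ∈ Finset.image f Finset.univ
  · rw [if_pos h, if_neg (fun hp => (hnot.mp hp) h)]; ring
  · rw [if_neg h, if_pos (hnot.mpr h)]; ring

lemma u_mul {N A : ℕ} (i j : Fin N) (f : Fin A → Fin N) :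
    u {i} f * u {j} f = u ({i, j} : Finset (Fin N)) f := by
  have hiff : (∀ a, f a ∉ ({i, j} : Finset (Fin N)))
      ↔ (∀ a, f a ∉ ({i} : Finset (Fin N))) ∧ (∀ a, f a ∉ ({j} : Finset (Fin N))) := by
    simp [forall_and, not_or]
  unfold u
  by_cases h1 : ∀ a, f a ∉ ({i} : Finset (Fin N)) <;>
    by_cases h2 : ∀ a, f a ∉ ({j} : Finset (Fin N))
  · rw [if_pos h1, if_pos h2, if_pos (hiff.mpr ⟨h1, h2⟩)]; norm_num
  · rw [if_pos h1, if_neg h2, if_neg (fun h => h2 (hiff.mp h).2)]; norm_num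
  · rw [if_neg h1, if_pos h2, if_neg (fun h => h1 (hiff.mp h).1)]; norm_num
  · rw [if_neg h1, if_neg h2, if_neg (fun h => h1 (hiff.mp h).1)]; norm_num

lemma card_image_eq {N A : ℕ} (f : Fin A → Fin N) :
    ((Finset.image f Finset.univ).card : ℚ)
      = ∑ i : Fin N, (if i ∈ Finset.image f Finset.univ then (1:ℚ) else 0) := by
  rw [Finset.sum_boole]
  congr 1
  rw [Finset.filter_mem_eq_inter, Finset.univ_inter]

lemma sum_u_single {N A : ℕ} (hN : 1 ≤ N) (i : Fin N) :
    ∑ f : Fin A → Fin N, u {i} f = ((N:ℚ) - 1) ^ A := by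
  have h : ((({i} : Finset (Fin N))ᶜ.card : ℚ)) = (N:ℚ) - 1 := by
    rw [Finset.card_compl, Finset.card_singleton, Fintype.card_fin, Nat.cast_sub hN]
    simp
  rw [sum_u, h]

lemma sum_u_pair {N A : ℕ} (hN : 2 ≤ N) {i j : Fin N} (hij : i ≠ j) :
    ∑ f : Fin A → Fin N, u {i, j} f = ((N:ℚ) - 2) ^ A := by
  have hcard : ({i, j} : Finset (Fin N)).card = 2 := by
    rw [Finset.card_insert_of_notMem (by simpa using hij), Finset.card_singleton]
  have h : ((({i, j} : Finset (Fin N))ᶜ.card : ℚ)) = (N:ℚ) - 2 := by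
    rw [Finset.card_compl, hcard, Fintype.card_fin, Nat.cast_sub hN]
    simp
  rw [sum_u, h]

lemma card_fun_univ (N A : ℕ) :
    ((Finset.univ : Finset (Fin A → Fin N)).card : ℚ) = (N:ℚ) ^ A := by
  rw [Finset.card_univ]
  simp

lemma sum_ite_fin {N : ℕ} (i : Fin N) (a b : ℚ) :
    ∑ j : Fin N, (if j = i then a else b) = a + ((N:ℚ) - 1) * b := by
  calc ∑ j : Fin N, (if j = i then a else b)
      = ∑ j : Fin N, ((if j = i then a - b else 0) + b) := by
        apply Finset.sum_congr rfl; intro j _; split_ifs <;> ring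
    _ = (a - b) + (N:ℚ) * b := by
        rw [Finset.sum_add_distrib, Finset.sum_ite_eq' Finset.univ i (fun _ => a - b)]
        simp [Finset.card_univ, mul_comm]
    _ = a + ((N:ℚ) - 1) * b := by ring

lemma hc_expand {N A : ℕ} (f : Fin A → Fin N) :
    ((Finset.image f Finset.univ).card : ℚ) = ∑ i : Fin N, (1 - u {i} f) := by
  rw [card_image_eq]
  exact Finset.sum_congr rfl (fun i _ => ind_eq i f)

lemma hsum1 {N A : ℕ} (hN : 1 ≤ N) (i : Fin N) :
    ∑ f : Fin A → Fin N, (1 - u {i} f) = (N:ℚ) ^ A - ((N:ℚ) - 1) ^ A := by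
  rw [Finset.sum_sub_distrib, sum_u_single hN, Finset.sum_const, nsmul_eq_mul, mul_one,
    card_fun_univ]

lemma hS1 {N A : ℕ} (hN : 1 ≤ N) :
    ∑ f : Fin A → Fin N, ((Finset.image f Finset.univ).card : ℚ)
      = (N:ℚ) * ((N:ℚ) ^ A - ((N:ℚ) - 1) ^ A) := by
  calc ∑ f : Fin A → Fin N, ((Finset.image f Finset.univ).card : ℚ)
      = ∑ f : Fin A → Fin N, ∑ i : Fin N, (1 - u {i} f) :=
        Finset.sum_congr rfl (fun f _ => hc_expand f)
    _ = ∑ i : Fin N, ∑ f : Fin A → Fin N, (1 - u {i} f) := Finset.sum_comm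
    _ = ∑ _i : Fin N, ((N:ℚ) ^ A - ((N:ℚ) - 1) ^ A) :=
        Finset.sum_congr rfl (fun i _ => hsum1 hN i)
    _ = (N:ℚ) * ((N:ℚ) ^ A - ((N:ℚ) - 1) ^ A) := by
        rw [Finset.sum_const, nsmul_eq_mul, Finset.card_univ, Fintype.card_fin]

lemma hpair {N A : ℕ} (hN : 2 ≤ N) (i j : Fin N) :
    ∑ f : Fin A → Fin N, ((1 - u {i} f) * (1 - u {j} f))
      = if j = i then (N:ℚ) ^ A - ((N:ℚ) - 1) ^ A
        else (N:ℚ) ^ A - 2 * ((N:ℚ) - 1) ^ A + ((N:ℚ) - 2) ^ A := by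
  have hN1 : 1 ≤ N := le_trans (by norm_num) hN
  by_cases hij : j = i
  · subst hij
    have hsq : ∀ f : Fin A → Fin N, (1 - u {j} f) * (1 - u {j} f) = 1 - u {j} f := by
      intro f; unfold u; split_ifs <;> ring
    rw [if_pos rfl]
    simp only [hsq]
    exact hsum1 hN1 j
  · rw [if_neg hij]
    have expand : ∀ f : Fin A → Fin N,
        (1 - u {i} f) * (1 - u {j} f) = 1 - u {i} f - u {j} f + u ({i, j}) f := by
      intro f; rw [← u_mul]; ring
    simp only [expand]
    rw [Finset.sum_add_distrib, Finset.sum_sub_distrib, Finset.sum_sub_distrib,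
      sum_u_single hN1, sum_u_single hN1, sum_u_pair hN (fun h => hij h.symm),
      Finset.sum_const, nsmul_eq_mul, mul_one, card_fun_univ]
    ring

lemma hS2 {N A : ℕ} (hN : 2 ≤ N) :
    ∑ f : Fin A → Fin N, ((Finset.image f Finset.univ).card : ℚ) ^ 2
      = (N:ℚ) * ((N:ℚ) ^ A - ((N:ℚ) - 1) ^ A)
        + (N:ℚ) * ((N:ℚ) - 1)
          * ((N:ℚ) ^ A - 2 * ((N:ℚ) - 1) ^ A + ((N:ℚ) - 2) ^ A) := by
  calc ∑ f : Fin A → Fin N, ((Finset.image f Finset.univ).card : ℚ) ^ 2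
      = ∑ f : Fin A → Fin N, ∑ i : Fin N, ∑ j : Fin N, ((1 - u {i} f) * (1 - u {j} f)) := by
        apply Finset.sum_congr rfl; intro f _
        rw [hc_expand f, sq, Finset.sum_mul_sum]
    _ = ∑ i : Fin N, ∑ f : Fin A → Fin N, ∑ j : Fin N, ((1 - u {i} f) * (1 - u {j} f)) :=
        Finset.sum_comm
    _ = ∑ i : Fin N, ∑ j : Fin N, ∑ f : Fin A → Fin N, ((1 - u {i} f) * (1 - u {j} f)) :=
        Finset.sum_congr rfl (fun i _ => Finset.sum_comm)
    _ = ∑ i : Fin N, ∑ j : Fin N,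
          (if j = i then (N:ℚ) ^ A - ((N:ℚ) - 1) ^ A
           else (N:ℚ) ^ A - 2 * ((N:ℚ) - 1) ^ A + ((N:ℚ) - 2) ^ A) :=
        Finset.sum_congr rfl (fun i _ => Finset.sum_congr rfl (fun j _ => hpair hN i j))
    _ = ∑ _i : Fin N, (((N:ℚ) ^ A - ((N:ℚ) - 1) ^ A)
          + ((N:ℚ) - 1) * ((N:ℚ) ^ A - 2 * ((N:ℚ) - 1) ^ A + ((N:ℚ) - 2) ^ A)) :=
        Finset.sum_congr rfl (fun i _ => sum_ite_fin i _ _)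
    _ = _ := by
        rw [Finset.sum_const, nsmul_eq_mul, Finset.card_univ, Fintype.card_fin]
        ring


/-- The variance of the number of unique original items (the cardinality of
the range of a uniformly random function `f : Fin A → Fin N`) equals
`N·(N-1)·(1 - 2/N)^A + N·(1 - 1/N)^A - N^2·(1 - 1/N)^{2A}`.  The variance is
expressed with respect to the uniform measure on the `N^A` functions: with
`μ = (Σ_f |range f|) / N^A`, it is `(Σ_f (|range f| - μ)^2) / N^A`. -/
theorem variance_card_range (N A : ℕ) (hN : 2 ≤ N) (μ : ℚ)
    (hμ : μ = (∑ f : Fin A → Fin N, ((Finset.image f Finset.univ).card : ℚ))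
        / (N : ℚ) ^ A) :
    (∑ f : Fin A → Fin N, (((Finset.image f Finset.univ).card : ℚ) - μ) ^ 2)
        / (N : ℚ) ^ A
      = (N : ℚ) * ((N : ℚ) - 1) * (1 - 2 / (N : ℚ)) ^ A
        + (N : ℚ) * (1 - 1 / (N : ℚ)) ^ A
        - (N : ℚ) ^ 2 * (1 - 1 / (N : ℚ)) ^ (2 * A) := by
  have hN1 : 1 ≤ N := le_trans (by norm_num) hN
  have hn0 : (N:ℚ) ≠ 0 := Nat.cast_ne_zero.mpr (by omega)
  have hnA : (N:ℚ) ^ A ≠ 0 := pow_ne_zero _ hn0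
  have hexp : ∑ f : Fin A → Fin N, (((Finset.image f Finset.univ).card : ℚ) - μ) ^ 2
      = (∑ f : Fin A → Fin N, ((Finset.image f Finset.univ).card : ℚ) ^ 2)
        - 2 * μ * (∑ f : Fin A → Fin N, ((Finset.image f Finset.univ).card : ℚ))
        + (N:ℚ) ^ A * μ ^ 2 := by
    have hpt : ∀ f : Fin A → Fin N,
        (((Finset.image f Finset.univ).card : ℚ) - μ) ^ 2
          = ((Finset.image f Finset.univ).card : ℚ) ^ 2
            - 2 * μ * ((Finset.image f Finset.univ).card : ℚ) + μ ^ 2 := fun f => by ring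
    simp only [hpt]
    rw [Finset.sum_add_distrib, Finset.sum_sub_distrib, Finset.sum_const, nsmul_eq_mul,
      card_fun_univ, ← Finset.mul_sum]
  rw [hexp, hS1 hN1, hS2 hN, hμ, hS1 hN1]
  have e1 : (1 - 1/(N:ℚ)) = ((N:ℚ) - 1)/(N:ℚ) := by field_simp
  have e2 : (1 - 2/(N:ℚ)) = ((N:ℚ) - 2)/(N:ℚ) := by field_simp
  rw [e1, e2, mul_comm 2 A, pow_mul]
  simp only [div_pow]
  field_simp
  ring
end

section
/- Fix a real number α > 0 and set A(N) = ⌊α·N⌋. Then the normalized variance of the number of unique original items in a bootstrap sample of A(N) items drawn with replacement from N items converges: (1/N)·[N·(N-1)·(1 - 2/N)^{A(N)} + N·(1 - 1/N)^{A(N)} - N^2·(1 - 1/N)^{2·A(N)}] tends to e^{-α} - (1 + α)·e^{-2α} as N → ∞. -/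
open Filter

lemma nvl_floor_ratio (α : ℝ) (hα : 0 < α) :
    Tendsto (fun N : ℕ => (⌊α * N⌋₊ : ℝ) / N) atTop (nhds α) := by
  have hlow : Tendsto (fun N : ℕ => α - 1 / (N : ℝ)) atTop (nhds α) := by
    simpa using tendsto_const_nhds.sub (tendsto_one_div_atTop_nhds_zero_nat (𝕜 := ℝ))
  refine tendsto_of_tendsto_of_tendsto_of_le_of_le' hlow tendsto_const_nhds ?_ ?_
  · filter_upwards [eventually_ge_atTop 1] with N hN
    have hN' : (0:ℝ) < N := by exact_mod_cast hN
    rw [le_div_iff₀ hN']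
    have h1 : α * N - 1 < (⌊α * (N:ℝ)⌋₊ : ℝ) := Nat.sub_one_lt_floor (α * N)
    have h2 : (1 / (N:ℝ)) * N = 1 := by field_simp
    nlinarith
  · filter_upwards [eventually_ge_atTop 1] with N hN
    have hN' : (0:ℝ) < N := by exact_mod_cast hN
    rw [div_le_iff₀ hN']
    exact Nat.floor_le (by positivity)

lemma nvl_pow_limit (α : ℝ) (hα : 0 < α) (r : ℝ) :
    Tendsto (fun N : ℕ => (1 + r / (N : ℝ)) ^ (⌊α * N⌋₊)) atTop
      (nhds (Real.exp (α * r))) := by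
  have hNlog : Tendsto (fun N : ℕ => (N : ℝ) * Real.log (1 + r / N)) atTop (nhds r) :=
    (Real.tendsto_mul_log_one_add_div_atTop r).comp tendsto_natCast_atTop_atTop
  have hAlog : Tendsto (fun N : ℕ => (⌊α * N⌋₊ : ℝ) * Real.log (1 + r / N)) atTop
      (nhds (α * r)) := by
    refine ((nvl_floor_ratio α hα).mul hNlog).congr' ?_
    filter_upwards [eventually_gt_atTop 0] with N hN
    have hN' : (N : ℝ) ≠ 0 := by positivity
    field_simp
  have hpos : ∀ᶠ N : ℕ in atTop, (0:ℝ) < 1 + r / N := by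
    have := (tendsto_const_div_atTop_nhds_zero_nat r).eventually
      (eventually_gt_nhds (show (-1:ℝ) < 0 by norm_num))
    filter_upwards [this] with N hN
    linarith
  refine ((Real.continuous_exp.tendsto _).comp hAlog).congr' ?_
  filter_upwards [hpos] with N hN
  simp only [Function.comp_apply]
  rw [Real.exp_nat_mul, Real.exp_log hN]

/-- With `A(N) = ⌊α·N⌋` items drawn with replacement from `N` items, the
normalized variance of the number of unique original items,
`(1/N)·[N·(N-1)·(1 - 2/N)^{A(N)} + N·(1 - 1/N)^{A(N)} - N^2·(1 - 1/N)^{2·A(N)}]`,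
tends to `e^{-α} - (1 + α)·e^{-2α}` as `N → ∞`. -/
theorem normalized_variance_limit (α : ℝ) (hα : 0 < α) :
    Tendsto
      (fun N : ℕ =>
        (1 / (N : ℝ)) *
          ((N : ℝ) * ((N : ℝ) - 1) * (1 - 2 / (N : ℝ)) ^ (⌊α * N⌋₊)
            + (N : ℝ) * (1 - 1 / (N : ℝ)) ^ (⌊α * N⌋₊)
            - (N : ℝ) ^ 2 * (1 - 1 / (N : ℝ)) ^ (2 * ⌊α * N⌋₊)))
      atTop (nhds (Real.exp (-α) - (1 + α) * Real.exp (-2 * α))) := by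
  set A : ℕ → ℕ := fun N => ⌊α * N⌋₊ with hA
  set u : ℕ → ℝ := fun N => 1 / ((N : ℝ) * ((N : ℝ) - 2)) with hu
  set t : ℕ → ℝ := fun N => (A N : ℝ) * Real.log (1 + u N) with ht
  -- basic eventual positivity facts
  have hNbig : ∀ᶠ N : ℕ in atTop, (3:ℝ) ≤ (N : ℝ) := by
    filter_upwards [eventually_ge_atTop 3] with N hN
    exact_mod_cast hN
  have hupos : ∀ᶠ N : ℕ in atTop, 0 < u N := by
    filter_upwards [hNbig] with N hN
    have : (0:ℝ) < (N : ℝ) * ((N : ℝ) - 2) := by nlinarith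
    positivity
  have hApos : ∀ᶠ N : ℕ in atTop, 0 < A N := by
    have h1 : ∀ᶠ N : ℕ in atTop, α / 2 < (A N : ℝ) / N :=
      (nvl_floor_ratio α hα).eventually (eventually_gt_nhds (half_lt_self hα))
    filter_upwards [h1, eventually_ge_atTop 1] with N h hN1
    rcases Nat.eq_zero_or_pos (A N) with h0 | h0
    · rw [h0] at h
      simp only [Nat.cast_zero, zero_div] at h
      linarith [half_pos hα]
    · exact h0
  -- u → 0
  have hu0 : Tendsto u atTop (nhds 0) := by
    have hden : Tendsto (fun N : ℕ => (N : ℝ) * ((N : ℝ) - 2)) atTop atTop := by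
      refine Tendsto.atTop_mul_atTop₀ tendsto_natCast_atTop_atTop ?_
      exact tendsto_atTop_add_const_right _ (-2) tendsto_natCast_atTop_atTop
    refine (tendsto_inv_atTop_zero.comp hden).congr fun N => ?_
    simp [hu, Function.comp, one_div]
  -- log(1+u)/u → 1
  have hlog1 : Tendsto (fun h : ℝ => h⁻¹ * Real.log (1 + h)) (nhdsWithin 0 {(0:ℝ)}ᶜ)
      (nhds 1) := by
    have := Real.hasDerivAt_log (one_ne_zero)
    rw [hasDerivAt_iff_tendsto_slope_zero] at this
    simpa using this
  have hu_ne : Tendsto u atTop (nhdsWithin 0 {(0:ℝ)}ᶜ) := by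
    refine tendsto_nhdsWithin_of_tendsto_nhds_of_eventually_within _ hu0 ?_
    filter_upwards [hupos] with N hN
    exact ne_of_gt hN
  have hlogratio : Tendsto (fun N => Real.log (1 + u N) / u N) atTop (nhds 1) := by
    have := hlog1.comp hu_ne
    refine this.congr fun N => ?_
    simp [Function.comp, div_eq_inv_mul]
  -- N/(N-2) → 1
  have hNdiv : Tendsto (fun N : ℕ => (N : ℝ) / ((N : ℝ) - 2)) atTop (nhds 1) := by
    have h2N : Tendsto (fun N : ℕ => 1 - 2 / (N : ℝ)) atTop (nhds 1) := by
      simpa using tendsto_const_nhds.sub (tendsto_const_div_atTop_nhds_zero_nat (2:ℝ))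
    have := h2N.inv₀ one_ne_zero
    rw [inv_one] at this
    refine this.congr' ?_
    filter_upwards [hNbig] with N hN
    have hN0 : (N:ℝ) ≠ 0 := by linarith
    have hN2 : (N:ℝ) - 2 ≠ 0 := by linarith
    field_simp
  -- N * t → α
  have hNt : Tendsto (fun N : ℕ => (N : ℝ) * t N) atTop (nhds α) := by
    have := ((nvl_floor_ratio α hα).mul hNdiv).mul hlogratio
    rw [show α * 1 * 1 = α by ring] at this
    refine this.congr' ?_
    filter_upwards [hNbig] with N hN
    have hN0 : (N:ℝ) ≠ 0 := by linarith
    have hN2 : (N:ℝ) - 2 ≠ 0 := by linarith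
    have hu_ne0 : u N ≠ 0 := by
      simp only [hu]
      positivity
    simp only [ht, hu] at *
    field_simp
    ring
  -- t → 0
  have ht0 : Tendsto t atTop (nhds 0) := by
    have := hNt.mul tendsto_one_div_atTop_nhds_zero_nat
    rw [mul_zero] at this
    refine this.congr' ?_
    filter_upwards [hNbig] with N hN
    have hN0 : (N:ℝ) ≠ 0 := by linarith
    field_simp
  -- t > 0 eventually
  have htpos : ∀ᶠ N : ℕ in atTop, 0 < t N := by
    filter_upwards [hupos, hApos] with N h1 h2
    have hlogpos : 0 < Real.log (1 + u N) := Real.log_pos (by linarith)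
    have : (0:ℝ) < (A N : ℝ) := by exact_mod_cast h2
    exact mul_pos this hlogpos
  -- (exp t - 1)/t → 1
  have hexp1 : Tendsto (fun h : ℝ => h⁻¹ * (Real.exp h - 1)) (nhdsWithin 0 {(0:ℝ)}ᶜ)
      (nhds 1) := by
    have := Real.hasDerivAt_exp 0
    rw [hasDerivAt_iff_tendsto_slope_zero] at this
    simpa using this
  have ht_ne : Tendsto t atTop (nhdsWithin 0 {(0:ℝ)}ᶜ) := by
    refine tendsto_nhdsWithin_of_tendsto_nhds_of_eventually_within _ ht0 ?_
    filter_upwards [htpos] with N hN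
    exact ne_of_gt hN
  have hslope : Tendsto (fun N => (Real.exp (t N) - 1) / t N) atTop (nhds 1) := by
    have := hexp1.comp ht_ne
    refine this.congr fun N => ?_
    simp [Function.comp, div_eq_inv_mul]
  -- main hard limit : N * (1 - (1+u)^A) → -α
  have hmain : Tendsto (fun N : ℕ => (N : ℝ) * (1 - (1 + u N) ^ (A N))) atTop
      (nhds (-α)) := by
    have := (hNt.neg).mul hslope
    rw [show -α * 1 = -α by ring] at this
    refine this.congr' ?_
    filter_upwards [hupos, htpos] with N h1 h2
    have hcA : (1 + u N) ^ (A N) = Real.exp (t N) := by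
      rw [ht]
      rw [Real.exp_nat_mul, Real.exp_log (by linarith)]
    rw [hcA]
    have ht_ne0 : t N ≠ 0 := ne_of_gt h2
    field_simp
    ring
  -- simple limits
  have hA1 : Tendsto (fun N : ℕ => (1 - 1 / (N : ℝ)) ^ (A N)) atTop
      (nhds (Real.exp (-α))) := by
    have := nvl_pow_limit α hα (-1)
    rw [show α * (-1) = -α by ring] at this
    refine this.congr fun N => ?_
    rw [hA]
    congr 1
    ring
  have hB : Tendsto (fun N : ℕ => (1 - 2 / (N : ℝ)) ^ (A N)) atTop
      (nhds (Real.exp (-2 * α))) := by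
    have := nvl_pow_limit α hα (-2)
    rw [show α * (-2) = -2 * α by ring] at this
    refine this.congr fun N => ?_
    rw [hA]
    congr 1
    ring
  -- combine
  have hcomb : Tendsto
      (fun N : ℕ => (1 - 1 / (N : ℝ)) ^ (A N) - (1 - 2 / (N : ℝ)) ^ (A N)
        + (1 - 2 / (N : ℝ)) ^ (A N) * ((N : ℝ) * (1 - (1 + u N) ^ (A N))))
      atTop (nhds (Real.exp (-α) - Real.exp (-2 * α) + Real.exp (-2 * α) * (-α))) :=
    (hA1.sub hB).add (hB.mul hmain)
  rw [show Real.exp (-α) - (1 + α) * Real.exp (-2 * α)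
      = Real.exp (-α) - Real.exp (-2 * α) + Real.exp (-2 * α) * (-α) by ring]
  refine Tendsto.congr' ?_ hcomb
  filter_upwards [hNbig] with N hN
  have hN0 : (N:ℝ) ≠ 0 := by linarith
  have hN2 : (N:ℝ) - 2 ≠ 0 := by linarith
  have key : (1 - 1 / (N:ℝ)) ^ (2 * A N)
      = (1 - 2 / (N:ℝ)) ^ (A N) * (1 + u N) ^ (A N) := by
    rw [pow_mul, ← mul_pow]
    congr 1
    rw [hu]
    field_simp
    ring
  rw [key]
  simp only [hA]
  field_simp
  ring
end

section
/- Let the set Fin N be partitioned into C blocks S_1, ..., S_C with |S_s| = N_s, and let k_1, ..., k_C and A be natural numbers. The number of functions f : Fin A → Fin N such that the range of f meets S_s in exactly k_s elements for every s equals Σ (A! / (a_1! ··· a_C!)) · Π_{s=1}^{C} (N_s)_{k_s} · S(a_s, k_s), where the sum ranges over all tuples (a_1, ..., a_C) of natural numbers with a_1 + ... + a_C = A. Equivalently, the probability that a bootstrap sample of A items drawn with replacement from the N items contains exactly k_s unique items from category s for each s equals (1/N^A) times this count. -/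
open Finset

lemma image_snoc {a : ℕ} {β : Type*} [DecidableEq β] (g : Fin a → β) (y : β) :
    Finset.image (Fin.snoc g y) Finset.univ = insert y (Finset.image g Finset.univ) := by
  ext b
  simp only [mem_image, mem_insert, mem_univ, true_and]
  constructor
  · rintro ⟨i, rfl⟩
    refine Fin.lastCases ?_ ?_ i
    · left; simp
    · intro j; right; exact ⟨j, by simp⟩
  · rintro (rfl | ⟨j, rfl⟩)
    · exact ⟨Fin.last a, by simp⟩
    · exact ⟨j.castSucc, by simp⟩

lemma count_insert_card {β : Type*} [Fintype β] [DecidableEq β] (t : Finset β) (m : ℕ) :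
    (univ.filter fun y : β => (insert y t).card = m).card =
      if t.card = m then t.card
      else if t.card + 1 = m then Fintype.card β - t.card else 0 := by
  by_cases h1 : t.card = m
  · rw [if_pos h1]
    have : (univ.filter fun y : β => (insert y t).card = m) = t := by
      ext y
      by_cases hy : y ∈ t
      · simp [hy, card_insert_of_mem, h1]
      · simp only [mem_filter, mem_univ, true_and, card_insert_of_notMem hy]
        simp [hy]
        omega
    rw [this]
  · rw [if_neg h1]
    by_cases h2 : t.card + 1 = m
    · rw [if_pos h2]
      have : (univ.filter fun y : β => (insert y t).card = m) = tᶜ := by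
        ext y
        by_cases hy : y ∈ t
        · simp [hy, card_insert_of_mem, h1]
        · simp [hy, card_insert_of_notMem, h2]
      rw [this, card_compl]
    · rw [if_neg h2]
      have : (univ.filter fun y : β => (insert y t).card = m) = ∅ := by
        ext y
        by_cases hy : y ∈ t
        · simp [hy, card_insert_of_mem, h1]
        · simp [hy, card_insert_of_notMem, h2]
      rw [this, card_empty]

lemma L1_fin {β : Type*} [Fintype β] [DecidableEq β] :
    ∀ (a k : ℕ),
    (univ.filter fun f : Fin a → β => (Finset.image f univ).card = k).card
      = (Fintype.card β).descFactorial k * stirling a k := by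
  intro a
  induction a with
  | zero =>
    intro k
    match k with
    | 0 =>
      have : (univ.filter fun f : Fin 0 → β => (Finset.image f univ).card = 0) = univ := by
        ext f; simp
      rw [this]
      simp [stirling, Fintype.card_eq_one_iff_nonempty_unique]
    | k + 1 =>
      have : (univ.filter fun f : Fin 0 → β => (Finset.image f univ).card = k + 1) = ∅ := by
        ext f; simp
      rw [this]
      simp [stirling]
  | succ a ih =>
    intro k
    match k with
    | 0 =>
      have : (univ.filter fun f : Fin (a+1) → β => (Finset.image f univ).card = 0) = ∅ := by
        ext f
        simp only [mem_filter, mem_univ, true_and, notMem_empty, iff_false, card_eq_zero,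
          image_eq_empty]
        exact fun h => by simpa [h] using univ_nonempty (α := Fin (a+1))
      rw [this]
      simp [stirling]
    | k + 1 =>
      have key : (univ.filter fun f : Fin (a+1) → β => (Finset.image f univ).card = k + 1).card
          = ∑ g : Fin a → β,
              ((univ.filter fun f : Fin (a+1) → β => (Finset.image f univ).card = k + 1).filter
                fun f => Fin.init f = g).card :=
        card_eq_sum_card_fiberwise (fun f _ => mem_univ _)
      rw [key]
      have fib : ∀ g : Fin a → β,
          ((univ.filter fun f : Fin (a+1) → β => (Finset.image f univ).card = k + 1).filter
              fun f => Fin.init f = g).card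
            = (univ.filter fun y : β => (insert y (Finset.image g univ)).card = k + 1).card := by
        intro g
        refine card_bij' (fun f _ => f (Fin.last a)) (fun y _ => Fin.snoc g y) ?_ ?_ ?_ ?_
        · rintro f hf
          simp only [mem_filter, mem_univ, true_and] at hf ⊢
          obtain ⟨h1, h2⟩ := hf
          rw [← h2, ← image_snoc, Fin.snoc_init_self]
          exact h1
        · intro y hy
          simp only [mem_filter, mem_univ, true_and] at hy ⊢
          refine ⟨by rwa [image_snoc], ?_⟩
          funext i; simp [Fin.init]
        · intro f hf
          simp only [mem_filter, mem_univ, true_and] at hf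
          obtain ⟨h1, h2⟩ := hf
          subst h2
          exact Fin.snoc_init_self f
        · intro y _; simp
      simp_rw [fib, count_insert_card]
      have split : ∀ g : Fin a → β,
          (if (Finset.image g univ).card = k + 1 then (Finset.image g univ).card
            else if (Finset.image g univ).card + 1 = k + 1 then
              Fintype.card β - (Finset.image g univ).card else 0)
          = (if (Finset.image g univ).card = k + 1 then (k+1) else 0)
            + (if (Finset.image g univ).card = k then Fintype.card β - k else 0) := by
        intro g
        by_cases h1 : (Finset.image g univ).card = k + 1
        · simp [h1]
        · by_cases h2 : (Finset.image g univ).card = k <;> simp [h1, h2]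
      rw [Finset.sum_congr rfl (fun g _ => split g), Finset.sum_add_distrib]
      rw [← Finset.sum_filter, ← Finset.sum_filter, Finset.sum_const, Finset.sum_const,
        smul_eq_mul, smul_eq_mul]
      rw [ih (k+1), ih k]
      rw [Nat.descFactorial_succ]
      show _ = (Fintype.card β - k) * Nat.descFactorial (Fintype.card β) k *
        ((k + 1) * stirling a (k + 1) + stirling a k)
      ring

lemma L1 {α β : Type*} [Fintype α] [DecidableEq α] [Fintype β] [DecidableEq β] (k : ℕ) :
    (univ.filter fun f : α → β => (Finset.image f univ).card = k).card
      = (Fintype.card β).descFactorial k * stirling (Fintype.card α) k := by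
  classical
  rw [← L1_fin (Fintype.card α) k]
  set e := Fintype.equivFin α with he
  refine card_bij' (fun f _ => f ∘ e.symm) (fun f _ => f ∘ e) ?_ ?_ ?_ ?_
  · intro f hf
    simp only [mem_filter, mem_univ, true_and] at hf ⊢
    rw [← hf]
    congr 1
    rw [← Finset.image_image, Finset.image_univ_equiv]
  · intro f hf
    simp only [mem_filter, mem_univ, true_and] at hf ⊢
    rw [← hf]
    congr 1
    rw [← Finset.image_image, Finset.image_univ_equiv]
  · intro f _; funext x; simp
  · intro f _; funext x; simp

lemma multinomial_image_succ {C : ℕ} (a : Fin (C+1) → ℕ) :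
    Nat.multinomial (univ.image Fin.succ) a = Nat.multinomial univ (fun s : Fin C => a s.succ) := by
  unfold Nat.multinomial
  rw [Finset.sum_image (fun x _ y _ h => Fin.succ_injective _ h),
    Finset.prod_image (fun x _ y _ h => Fin.succ_injective _ h)]

lemma L2 : ∀ (C : ℕ) (α : Type) [Fintype α] [DecidableEq α] (a : Fin C → ℕ),
    (∑ s, a s) = Fintype.card α →
    (univ.filter fun g : α → Fin C => ∀ s, (univ.filter fun x => g x = s).card = a s).card
      = Nat.multinomial univ a := by
  intro C
  induction C with
  | zero =>
    intro α _ _ a h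
    haveI : IsEmpty α := by
      rw [← Fintype.card_eq_zero_iff]
      simpa using h.symm
    rw [filter_true_of_mem (fun g _ => fun s => s.elim0), card_univ]
    simp [Nat.multinomial]
  | succ C ih =>
    intro α _ _ a h
    classical
    set F := (univ.filter fun g : α → Fin (C+1) =>
      ∀ s, (univ.filter fun x => g x = s).card = a s) with hF
    have key : F.card = ∑ B ∈ powersetCard (a 0) univ,
        (F.filter fun g => univ.filter (fun x => g x = 0) = B).card := by
      refine card_eq_sum_card_fiberwise (fun g hg => ?_)
      rw [mem_coe, mem_powersetCard]
      exact ⟨subset_univ _, (mem_filter.mp (mem_coe.mp hg)).2 0⟩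
    rw [key]
    have fib : ∀ B ∈ powersetCard (a 0) univ,
        (F.filter fun g => univ.filter (fun x => g x = 0) = B).card
          = (univ.filter fun h : {x : α // x ∉ B} → Fin C =>
              ∀ s, (univ.filter fun x => h x = s).card = a s.succ).card := by
      intro B hB
      rw [mem_powersetCard] at hB
      refine card_bij'
        (fun g hg => fun x : {x : α // x ∉ B} => (g x.1).pred (by
          have hg' := (mem_filter.mp hg).2
          intro h0
          have hx : (x : α) ∈ univ.filter (fun y => g y = 0) :=
            mem_filter.mpr ⟨mem_univ _, h0⟩
          rw [hg'] at hx
          exact x.2 hx))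
        (fun h _ => fun x : α => if hx : x ∈ B then 0 else (h ⟨x, hx⟩).succ)
        ?_ ?_ ?_ ?_
      · -- i maps into target
        intro g hg
        have hgF := (mem_filter.mp hg).1
        have hg0 := (mem_filter.mp hg).2
        have memB : ∀ x, x ∈ B ↔ g x = 0 := by
          intro x; rw [← hg0]; simp
        simp only [mem_filter, mem_univ, true_and]
        intro s
        rw [← (mem_filter.mp hgF).2 s.succ]
        refine card_bij' (fun x _ => x.1) (fun x hx => ⟨x, by
            rw [memB]
            simp only [mem_filter, mem_univ, true_and] at hx
            rw [hx]
            exact Fin.succ_ne_zero s⟩) ?_ ?_ ?_ ?_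
        · intro x hx
          simp only [mem_filter, mem_univ, true_and] at hx ⊢
          rw [← hx, Fin.succ_pred]
        · intro x hx
          simp only [mem_filter, mem_univ, true_and] at hx ⊢
          simp [hx]
        · intro x _; rfl
        · intro x _; rfl
      · -- j maps into F-fiber
        intro h hh
        simp only [mem_filter, mem_univ, true_and] at hh
        have hfib0 : (univ.filter fun x : α =>
            (if hx : x ∈ B then (0 : Fin (C+1)) else (h ⟨x, hx⟩).succ) = 0) = B := by
          ext x
          simp only [mem_filter, mem_univ, true_and]
          by_cases hx : x ∈ B
          · simp [hx]
          · simp [hx, Fin.succ_ne_zero]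
        refine mem_filter.mpr ⟨mem_filter.mpr ⟨mem_univ _, ?_⟩, hfib0⟩
        intro s
        induction s using Fin.cases with
        | zero => rw [hfib0]; exact hB.2
        | succ t =>
          rw [← hh t]
          refine card_bij' (fun x hx => (⟨x, by
              simp only [mem_filter, mem_univ, true_and] at hx
              intro hxB
              rw [dif_pos hxB] at hx
              exact (Fin.succ_ne_zero t) hx.symm⟩ : {x : α // x ∉ B}))
            (fun x _ => x.1) ?_ ?_ ?_ ?_
          · intro x hx
            simp only [mem_filter, mem_univ, true_and] at hx ⊢
            by_cases hxB : x ∈ B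
            · rw [dif_pos hxB] at hx
              exact absurd hx.symm (Fin.succ_ne_zero t)
            · rw [dif_neg hxB] at hx
              exact Fin.succ_injective _ hx
          · intro x hx
            simp only [mem_filter, mem_univ, true_and] at hx ⊢
            rw [dif_neg x.2, hx]
          · intro x _; rfl
          · intro x _; rfl
      · -- j ∘ i = id
        intro g hg
        have hgF := (mem_filter.mp hg).1
        have hg0 := (mem_filter.mp hg).2
        have memB : ∀ x, x ∈ B ↔ g x = 0 := by
          intro x; rw [← hg0]; simp
        funext x
        dsimp only
        by_cases hx : x ∈ B
        · rw [dif_pos hx]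
          exact ((memB x).mp hx).symm
        · rw [dif_neg hx, Fin.succ_pred]
      · -- i ∘ j = id
        intro h hh
        funext x
        have : (if hx : x.1 ∈ B then (0 : Fin (C+1)) else (h ⟨x.1, hx⟩).succ)
            = (h x).succ := by rw [dif_neg x.2]
        simp only [this]
        simp [Fin.pred_succ]
    rw [Finset.sum_congr rfl fib]
    have hsum : ∀ B ∈ powersetCard (a 0) univ,
        (univ.filter fun h : {x : α // x ∉ B} → Fin C =>
            ∀ s, (univ.filter fun x => h x = s).card = a s.succ).card
          = Nat.multinomial univ (fun s : Fin C => a s.succ) := by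
      intro B hB
      rw [mem_powersetCard] at hB
      refine ih _ (fun s => a s.succ) ?_
      have hcard : Fintype.card {x : α // x ∉ B} = Fintype.card α - a 0 := by
        rw [Fintype.card_subtype_compl]
        congr 1
        simpa using hB.2
      rw [hcard, ← h, Fin.sum_univ_succ, Nat.add_sub_cancel_left]
    rw [Finset.sum_congr rfl hsum, Finset.sum_const, card_powersetCard, card_univ, smul_eq_mul]
    have h0 : (0 : Fin (C+1)) ∉ univ.image Fin.succ := by
      simp only [mem_image, mem_univ, true_and, not_exists]
      intro t ht
      exact Fin.succ_ne_zero t ht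
    have huniv : (univ : Finset (Fin (C+1))) = Finset.cons 0 (univ.image Fin.succ) h0 := by
      ext s
      simp only [mem_univ, true_iff, Finset.mem_cons, mem_image]
      induction s using Fin.cases with
      | zero => left; rfl
      | succ t => right; exact ⟨t, trivial, rfl⟩
    conv_rhs => rw [huniv, Nat.multinomial_cons]
    rw [multinomial_image_succ, Finset.sum_image (fun x _ y _ h => Fin.succ_injective _ h)]
    have hh : a 0 + ∑ s : Fin C, a s.succ = Fintype.card α := by
      rw [← h, Fin.sum_univ_succ]
    rw [hh]

/-- If `Fin N` is partitioned into `C` blocks `S 1, ..., S C` with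
`|S s| = Ns s`, then the number of functions `f : Fin A → Fin N` whose range
meets `S s` in exactly `k s` elements for every `s` equals
`Σ_{a_1+...+a_C = A} (A! / (a_1!···a_C!)) · Π_s (Ns s)_{k s} · S(a_s, k_s)`;
dividing by `N^A` gives the corresponding probability for a bootstrap sample
of `A` items drawn with replacement from `N` items in `C` categories. -/
theorem multi_category_count (N C A : ℕ) (S : Fin C → Finset (Fin N))
    (Ns : Fin C → ℕ) (hcard : ∀ s, (S s).card = Ns s)
    (hdisj : ∀ s t, s ≠ t → Disjoint (S s) (S t))
    (hcover : ∀ i : Fin N, ∃ s, i ∈ S s) (k : Fin C → ℕ) :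
    (Finset.univ.filter
        (fun f : Fin A → Fin N =>
          ∀ s, ((Finset.image f Finset.univ) ∩ S s).card = k s)).card
      = ∑ a ∈ Finset.Nat.antidiagonalTuple C A,
          Nat.multinomial Finset.univ a *
            ∏ s, (Ns s).descFactorial (k s) * stirling (a s) (k s) := by
  classical
  set cls : Fin N → Fin C := fun i => (hcover i).choose with hclsdef
  have hcls : ∀ i, i ∈ S (cls i) := fun i => (hcover i).choose_spec
  have huniq : ∀ i s, i ∈ S s → cls i = s := by
    intro i s hi
    by_contra hne
    exact Finset.disjoint_left.mp (hdisj _ _ hne) (hcls i) hi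
  set F := (Finset.univ.filter
      (fun f : Fin A → Fin N =>
        ∀ s, ((Finset.image f Finset.univ) ∩ S s).card = k s)) with hFdef
  have key : F.card = ∑ g : Fin A → Fin C, (F.filter fun f => cls ∘ f = g).card :=
    card_eq_sum_card_fiberwise (fun f _ => mem_univ _)
  have fib : ∀ g : Fin A → Fin C,
      (F.filter fun f => cls ∘ f = g).card
        = ∏ s, (Ns s).descFactorial (k s) *
            stirling ((univ.filter fun x => g x = s).card) (k s) := by
    intro g
    have step1 : (F.filter fun f => cls ∘ f = g).card
        = (Fintype.piFinset (fun s => univ.filter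
            fun h : {x : Fin A // g x = s} → {y : Fin N // y ∈ S s} =>
              (Finset.image h univ).card = k s)).card := by
      refine card_bij'
        (fun f hf => fun s (x : {x : Fin A // g x = s}) =>
          (⟨f x.1, by
            have hcf := (mem_filter.mp hf).2
            have h1 : cls (f x.1) = g x.1 := congrFun hcf x.1
            have hb := hcls (f x.1)
            rw [h1, x.2] at hb
            exact hb⟩ : {y : Fin N // y ∈ S s}))
        (fun H _ => fun x : Fin A => ((H (g x)) ⟨x, rfl⟩).1)
        ?_ ?_ ?_ ?_
      · -- i maps into piFinset
        intro f hf
        have hcf := (mem_filter.mp hf).2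
        have hP := (mem_filter.mp (mem_filter.mp hf).1).2
        rw [Fintype.mem_piFinset]
        intro s
        simp only [mem_filter, mem_univ, true_and]
        have himg : Finset.image (fun y : {y : Fin N // y ∈ S s} => y.1)
            (Finset.image (fun x : {x : Fin A // g x = s} =>
              (⟨f x.1, by
                have h1 : cls (f x.1) = g x.1 := congrFun hcf x.1
                have hb := hcls (f x.1)
                rw [h1, x.2] at hb
                exact hb⟩ : {y : Fin N // y ∈ S s})) univ)
            = Finset.image f univ ∩ S s := by
          rw [Finset.image_image]
          ext y
          simp only [mem_image, mem_univ, true_and, mem_inter, Function.comp]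
          constructor
          · rintro ⟨x, rfl⟩
            refine ⟨⟨x.1, rfl⟩, ?_⟩
            have h1 : cls (f x.1) = g x.1 := congrFun hcf x.1
            have hb := hcls (f x.1)
            rw [h1, x.2] at hb
            exact hb
          · rintro ⟨⟨x, rfl⟩, hyS⟩
            have hgx : g x = s := by
              rw [← congrFun hcf x]
              exact huniq _ _ hyS
            exact ⟨⟨x, hgx⟩, rfl⟩
        have := congrArg Finset.card himg
        rw [Finset.card_image_of_injective _ Subtype.val_injective] at this
        rw [this]
        exact hP s
      · -- j maps into F-fiber
        intro H hH
        rw [Fintype.mem_piFinset] at hH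
        have hHmem : ∀ s (x : {x : Fin A // g x = s}), (H s x).1 ∈ S s := fun s x => (H s x).2
        have hclsj : ∀ x : Fin A, cls ((H (g x) ⟨x, rfl⟩).1) = g x :=
          fun x => huniq _ _ (hHmem (g x) ⟨x, rfl⟩)
        refine mem_filter.mpr ⟨mem_filter.mpr ⟨mem_univ _, ?_⟩, funext hclsj⟩
        intro s
        have himg : Finset.image (fun x : Fin A => ((H (g x)) ⟨x, rfl⟩).1) univ ∩ S s
            = Finset.image (fun x : {x : Fin A // g x = s} => (H s x).1) univ := by
          ext y
          simp only [mem_inter, mem_image, mem_univ, true_and]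
          constructor
          · rintro ⟨⟨x, rfl⟩, hyS⟩
            have hgx : g x = s := by
              by_contra hne
              exact Finset.disjoint_left.mp (hdisj _ _ (Ne.symm hne)) hyS
                (hHmem (g x) ⟨x, rfl⟩)
            subst hgx
            exact ⟨⟨x, rfl⟩, rfl⟩
          · rintro ⟨x, rfl⟩
            refine ⟨⟨x.1, ?_⟩, hHmem s x⟩
            obtain ⟨x, hx⟩ := x
            subst hx
            rfl
        rw [himg]
        have : Finset.image (fun x : {x : Fin A // g x = s} => (H s x).1) univ
            = Finset.image (fun y : {y : Fin N // y ∈ S s} => y.1)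
                (Finset.image (H s) univ) := by
          rw [Finset.image_image]; rfl
        rw [this, Finset.card_image_of_injective _ Subtype.val_injective]
        have := hH s
        simp only [mem_filter, mem_univ, true_and] at this
        exact this
      · -- j ∘ i = id
        intro f _
        rfl
      · -- i ∘ j = id
        intro H _
        funext s x
        apply Subtype.ext
        obtain ⟨x, hx⟩ := x
        subst hx
        rfl
    rw [step1, Fintype.card_piFinset]
    refine Finset.prod_congr rfl (fun s _ => ?_)
    rw [L1 (k s)]
    congr 1
    · congr 1
      refine (Fintype.card_congr (Equiv.refl _)).trans ?_
      rw [Fintype.card_coe, hcard s]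
    · congr 1
      refine (Fintype.card_congr (Equiv.refl _)).trans ?_
      rw [Fintype.card_subtype]
  rw [key, Finset.sum_congr rfl (fun g _ => fib g)]
  have maps : ∀ g : Fin A → Fin C, g ∈ (univ : Finset (Fin A → Fin C)) →
      (fun s => (univ.filter fun x => g x = s).card) ∈ Finset.Nat.antidiagonalTuple C A := by
    intro g _
    rw [Finset.Nat.mem_antidiagonalTuple]
    have hc : (univ : Finset (Fin A)).card
        = ∑ s : Fin C, (univ.filter fun x => g x = s).card :=
      card_eq_sum_card_fiberwise (fun x _ => mem_univ _)
    rw [← hc, card_univ, Fintype.card_fin]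
  rw [← Finset.sum_fiberwise_of_maps_to maps]
  refine Finset.sum_congr rfl (fun a ha => ?_)
  have inner : ∀ g ∈ univ.filter (fun g : Fin A → Fin C =>
      (fun s => (univ.filter fun x => g x = s).card) = a),
      (∏ s, (Ns s).descFactorial (k s) *
          stirling ((univ.filter fun x => g x = s).card) (k s))
        = ∏ s, (Ns s).descFactorial (k s) * stirling (a s) (k s) := by
    intro g hg
    have := (mem_filter.mp hg).2
    refine Finset.prod_congr rfl (fun s _ => ?_)
    rw [congrFun this s]
  rw [Finset.sum_congr rfl inner, Finset.sum_const, smul_eq_mul]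
  congr 1
  have : (univ.filter (fun g : Fin A → Fin C =>
      (fun s => (univ.filter fun x => g x = s).card) = a))
      = (univ.filter (fun g : Fin A → Fin C =>
        ∀ s, (univ.filter fun x => g x = s).card = a s)) := by
    refine Finset.filter_congr (fun g _ => ?_)
    rw [funext_iff]
  rw [this, L2 C (Fin A) a (by
    rw [Fintype.card_fin]
    exact Finset.Nat.mem_antidiagonalTuple.mp ha)]
end

section
/- Let N ≥ 2 and A be natural numbers and let S and T be disjoint subsets of Fin N with |S| = N_i and |T| = N_j. Then the sum over all functions f : Fin A → Fin N of |(range f) ∩ S| · |(range f) ∩ T| equals N_i·N_j·(N^A - 2·(N-1)^A + (N-2)^A). Equivalently, the covariance of the numbers of unique items from the two categories in a bootstrap sample of A items drawn with replacement from N items is N_i·N_j·[(1 - 2/N)^A - (1 - 1/N)^{2A}]. -/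
open Finset

lemma count_in_aux (N A : ℕ) (s : Finset (Fin N)) :
    (Finset.univ.filter (fun f : Fin A → Fin N => ∀ a, f a ∈ s)).card = s.card ^ A := by
  have h : Finset.univ.filter (fun f : Fin A → Fin N => ∀ a, f a ∈ s)
      = Fintype.piFinset (fun _ : Fin A => s) := by
    ext f; simp [Fintype.mem_piFinset]
  rw [h, Fintype.card_piFinset]
  simp

lemma inner_sum_aux (N A : ℕ) (hN : 2 ≤ N) (i j : Fin N) (hij : i ≠ j) :
    ∑ f : Fin A → Fin N,
      (if i ∈ Finset.image f Finset.univ then (1:ℤ) else 0) *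
      (if j ∈ Finset.image f Finset.univ then (1:ℤ) else 0)
    = (N:ℤ)^A - 2*((N:ℤ)-1)^A + ((N:ℤ)-2)^A := by
  have key : ∀ f : Fin A → Fin N,
      (if i ∈ Finset.image f Finset.univ then (1:ℤ) else 0) *
      (if j ∈ Finset.image f Finset.univ then (1:ℤ) else 0)
      = 1 - (if ∀ a, f a ≠ i then 1 else 0) - (if ∀ a, f a ≠ j then 1 else 0)
        + (if ∀ a, f a ≠ i ∧ f a ≠ j then 1 else 0) := by
    intro f
    have mi : (i ∈ Finset.image f Finset.univ) ↔ ¬ (∀ a, f a ≠ i) := by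
      simp [Finset.mem_image, not_forall]
    have mj : (j ∈ Finset.image f Finset.univ) ↔ ¬ (∀ a, f a ≠ j) := by
      simp [Finset.mem_image, not_forall]
    have mij : (∀ a, f a ≠ i ∧ f a ≠ j) ↔ (∀ a, f a ≠ i) ∧ (∀ a, f a ≠ j) := forall_and
    simp only [mij]
    by_cases hpi : ∀ a, f a ≠ i <;> by_cases hpj : ∀ a, f a ≠ j <;>
      simp [mi, mj, hpi, hpj]
  rw [Finset.sum_congr rfl (fun f _ => key f)]
  have c1 : (Finset.univ.filter (fun f : Fin A → Fin N => ∀ a, f a ≠ i)).card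
      = (N - 1) ^ A := by
    have : Finset.univ.filter (fun f : Fin A → Fin N => ∀ a, f a ≠ i)
        = Finset.univ.filter (fun f : Fin A → Fin N => ∀ a, f a ∈ Finset.univ.erase i) := by
      ext f; simp
    rw [this, count_in_aux]
    congr 1
    simp [Finset.card_erase_of_mem]
  have c2 : (Finset.univ.filter (fun f : Fin A → Fin N => ∀ a, f a ≠ j)).card
      = (N - 1) ^ A := by
    have : Finset.univ.filter (fun f : Fin A → Fin N => ∀ a, f a ≠ j)
        = Finset.univ.filter (fun f : Fin A → Fin N => ∀ a, f a ∈ Finset.univ.erase j) := by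
      ext f; simp
    rw [this, count_in_aux]
    congr 1
    simp [Finset.card_erase_of_mem]
  have c3 : (Finset.univ.filter (fun f : Fin A → Fin N => ∀ a, f a ≠ i ∧ f a ≠ j)).card
      = (N - 2) ^ A := by
    have : Finset.univ.filter (fun f : Fin A → Fin N => ∀ a, f a ≠ i ∧ f a ≠ j)
        = Finset.univ.filter
            (fun f : Fin A → Fin N => ∀ a, f a ∈ (Finset.univ.erase i).erase j) := by
      ext f
      simp only [Finset.mem_filter, Finset.mem_erase, Finset.mem_univ, and_true]
      constructor
      · intro ⟨_, h⟩; exact ⟨trivial, fun a => ⟨(h a).2, (h a).1⟩⟩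
      · intro ⟨_, h⟩; exact ⟨trivial, fun a => ⟨(h a).2, (h a).1⟩⟩
    rw [this, count_in_aux]
    congr 1
    rw [Finset.card_erase_of_mem (by simp [hij.symm]), Finset.card_erase_of_mem (by simp)]
    simp only [Finset.card_univ, Fintype.card_fin]
    rw [Nat.sub_sub]
  have hcard : Fintype.card (Fin A → Fin N) = N ^ A := by simp
  rw [Finset.sum_add_distrib, Finset.sum_sub_distrib, Finset.sum_sub_distrib,
    Finset.sum_const]
  simp only [Finset.sum_boole]
  rw [c1, c2, c3, Finset.card_univ, hcard]
  have h1 : ((N - 1 : ℕ) : ℤ) = (N : ℤ) - 1 := by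
    have : 1 ≤ N := le_trans one_le_two hN
    push_cast [this]; ring
  have h2 : ((N - 2 : ℕ) : ℤ) = (N : ℤ) - 2 := by
    push_cast [hN]; ring
  push_cast [h1, h2]
  ring

/-- For disjoint categories `S, T ⊆ Fin N` with `|S| = Ni` and `|T| = Nj`, the
sum over all functions `f : Fin A → Fin N` of
`|(range f) ∩ S| · |(range f) ∩ T|` equals
`Ni·Nj·(N^A - 2·(N-1)^A + (N-2)^A)`; equivalently, the covariance of the
numbers of unique items from the two categories in a bootstrap sample of `A`
items drawn with replacement from `N` items is
`Ni·Nj·[(1 - 2/N)^A - (1 - 1/N)^{2A}]`. -/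
theorem sum_prod_card_range_inter (N A Ni Nj : ℕ) (hN : 2 ≤ N)
    (S T : Finset (Fin N)) (hST : Disjoint S T)
    (hS : S.card = Ni) (hT : T.card = Nj) :
    ∑ f : Fin A → Fin N,
        (((Finset.image f Finset.univ) ∩ S).card : ℤ) *
          ((Finset.image f Finset.univ) ∩ T).card
      = (Ni : ℤ) * (Nj : ℤ) *
          ((N : ℤ) ^ A - 2 * ((N : ℤ) - 1) ^ A + ((N : ℤ) - 2) ^ A) := by
  have hconv : ∀ (f : Fin A → Fin N) (U : Finset (Fin N)),
      (((Finset.image f Finset.univ) ∩ U).card : ℤ)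
        = ∑ i ∈ U, if i ∈ Finset.image f Finset.univ then (1:ℤ) else 0 := by
    intro f U
    have : (Finset.image f Finset.univ) ∩ U = U.filter (· ∈ Finset.image f Finset.univ) := by
      ext x; simp [and_comm]
    rw [this, Finset.card_filter]
    push_cast
    rfl
  simp_rw [hconv, Finset.sum_mul_sum]
  rw [Finset.sum_comm]
  have step : ∀ i ∈ S, (∑ f : Fin A → Fin N, ∑ j ∈ T,
      (if i ∈ Finset.image f Finset.univ then (1:ℤ) else 0) *
      (if j ∈ Finset.image f Finset.univ then (1:ℤ) else 0))
      = (Nj : ℤ) * ((N:ℤ)^A - 2*((N:ℤ)-1)^A + ((N:ℤ)-2)^A) := by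
    intro i hi
    rw [Finset.sum_comm]
    have : ∀ j ∈ T, (∑ f : Fin A → Fin N,
        (if i ∈ Finset.image f Finset.univ then (1:ℤ) else 0) *
        (if j ∈ Finset.image f Finset.univ then (1:ℤ) else 0))
        = (N:ℤ)^A - 2*((N:ℤ)-1)^A + ((N:ℤ)-2)^A := by
      intro j hj
      exact inner_sum_aux N A hN i j (fun h => (Finset.disjoint_left.mp hST hi (h ▸ hj)))
    rw [Finset.sum_congr rfl this, Finset.sum_const, hT]
    ring
  rw [Finset.sum_congr rfl step, Finset.sum_const, hS]
  ring
end
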